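/- arXiv:2404.02666 — 4 statements merged into one kernel-verified Lean document; each statement's English description precedes it below -/
import Mathlib

section
/- If a (v,k,λ)-BIBD has a nesting, then k ≥ 2λ + 1. -/
open Finset

/-- Double counting: summing, over distinct ordered pairs, the number of blocks
containing both points equals summing over blocks the number of distinct ordered
pairs inside the block. -/
lemma stmt0_key {v b : ℕ} (C : Fin b → Finset (Fin v)) :
    ∑ pq ∈ (univ : Finset (Fin v)).offDiag,
      (univ.filter (fun i => pq.1 ∈ C i ∧ pq.2 ∈ C i)).card
    = ∑ i : Fin b, ((C i).offDiag).card := by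
  simp_rw [Finset.card_filter]
  rw [Finset.sum_comm]
  refine Finset.sum_congr rfl fun i _ => ?_
  rw [← Finset.card_filter]
  congr 1
  ext pq
  simp only [Finset.mem_filter, Finset.mem_offDiag, Finset.mem_univ, true_and]
  tauto

/-- If a `(v,k,λ)`-BIBD has a nesting, then `k ≥ 2λ + 1`.
The BIBD is given by an indexed family of blocks `B : Fin b → Finset (Fin v)`,
each of size `k`, with every pair of distinct points in exactly `lam` blocks.
A nesting `φ` adds a point `φ i ∉ B i` to each block so that every pair of
distinct points lies in at most `lam + 1` augmented blocks. -/
theorem stmt0 (v k lam b : ℕ) (hk2 : 2 ≤ k) (hkv : k < v)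
    (B : Fin b → Finset (Fin v)) (hcard : ∀ i, (B i).card = k)
    (hpair : ∀ p q : Fin v, p ≠ q →
      (univ.filter (fun i => p ∈ B i ∧ q ∈ B i)).card = lam)
    (φ : Fin b → Fin v) (hφ : ∀ i, φ i ∉ B i)
    (hnest : ∀ p q : Fin v, p ≠ q →
      (univ.filter (fun i => p ∈ insert (φ i) (B i) ∧ q ∈ insert (φ i) (B i))).card
        ≤ lam + 1) :
    2 * lam + 1 ≤ k := by
  obtain ⟨m, rfl⟩ : ∃ m, k = m + 2 := ⟨k - 2, by omega⟩
  have hv3 : 3 ≤ v := by omega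
  have hScard : ((univ : Finset (Fin v)).offDiag).card = v * v - v := by
    rw [Finset.offDiag_card, Finset.card_univ, Fintype.card_fin]
  -- Exact pair count
  have E1 : (v * v - v) * lam = b * ((m + 2) * (m + 1)) := by
    calc (v * v - v) * lam
        = ((univ : Finset (Fin v)).offDiag).card * lam := by rw [hScard]
      _ = ∑ _pq ∈ (univ : Finset (Fin v)).offDiag, lam := by
          rw [Finset.sum_const, smul_eq_mul]
      _ = ∑ pq ∈ (univ : Finset (Fin v)).offDiag,
            (univ.filter (fun i => pq.1 ∈ B i ∧ pq.2 ∈ B i)).card :=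
          Finset.sum_congr rfl (fun pq hpq =>
            (hpair pq.1 pq.2 (Finset.mem_offDiag.mp hpq).2.2).symm)
      _ = ∑ i : Fin b, ((B i).offDiag).card := stmt0_key B
      _ = b * ((m + 2) * (m + 1)) := by
          have h : ∀ i : Fin b, ((B i).offDiag).card = (m + 2) * (m + 1) := by
            intro i
            rw [Finset.offDiag_card, hcard i]
            have : (m + 2) * (m + 2) = (m + 2) * (m + 1) + (m + 2) := by ring
            omega
          simp [h, Finset.sum_const, mul_comm]
  -- Augmented pair count
  have E2 : b * ((m + 3) * (m + 2)) ≤ (v * v - v) * (lam + 1) := by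
    calc b * ((m + 3) * (m + 2))
        = ∑ i : Fin b, ((insert (φ i) (B i)).offDiag).card := by
          have h : ∀ i : Fin b, ((insert (φ i) (B i)).offDiag).card
              = (m + 3) * (m + 2) := by
            intro i
            rw [Finset.offDiag_card, Finset.card_insert_of_notMem (hφ i), hcard i]
            have h1 : (m + 2 + 1) * (m + 2 + 1) = (m + 3) * (m + 2) + (m + 3) := by ring
            omega
          simp [h, Finset.sum_const, mul_comm]
      _ = ∑ pq ∈ (univ : Finset (Fin v)).offDiag,
            (univ.filter (fun i => pq.1 ∈ insert (φ i) (B i) ∧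
              pq.2 ∈ insert (φ i) (B i))).card :=
          (stmt0_key (fun i => insert (φ i) (B i))).symm
      _ ≤ ∑ _pq ∈ (univ : Finset (Fin v)).offDiag, (lam + 1) :=
          Finset.sum_le_sum fun pq hpq => hnest pq.1 pq.2
            (Finset.mem_offDiag.mp hpq).2.2
      _ = (v * v - v) * (lam + 1) := by
          rw [Finset.sum_const, smul_eq_mul, hScard]
  -- Combine
  have hN : 6 ≤ v * v - v := by
    have : 3 * v ≤ v * v := Nat.mul_le_mul_right v hv3
    omega
  have h2bk : 2 * (b * (m + 2)) ≤ v * v - v := by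
    have hsplit : b * ((m + 3) * (m + 2))
        = b * ((m + 2) * (m + 1)) + 2 * (b * (m + 2)) := by ring
    have hdist : (v * v - v) * (lam + 1) = (v * v - v) * lam + (v * v - v) := by ring
    omega
  have hfin : 2 * lam * (v * v - v) ≤ (m + 1) * (v * v - v) := by
    calc 2 * lam * (v * v - v) = 2 * ((v * v - v) * lam) := by ring
      _ = 2 * (b * ((m + 2) * (m + 1))) := by rw [E1]
      _ = (2 * (b * (m + 2))) * (m + 1) := by ring
      _ ≤ (v * v - v) * (m + 1) := Nat.mul_le_mul_right _ h2bk
      _ = (m + 1) * (v * v - v) := by ring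
  have : 2 * lam ≤ m + 1 :=
    Nat.le_of_mul_le_mul_right hfin (by omega)
  omega
end

section
/- If a (v,k,λ)-BIBD has a perfect nesting, then v ≡ 1 (mod 2k). -/
open Finset

/-- Replication count: if every block has `m` points and every ordered pair of
distinct points lies in exactly `c` blocks, then for each point `p`,
`r_p * (m-1) = c * (v-1)`. -/
private lemma repl_count {v b : ℕ} (S : Fin b → Finset (Fin v)) (m c : ℕ)
    (hm : ∀ i, (S i).card = m)
    (hp : ∀ p q : Fin v, p ≠ q → (univ.filter fun i => p ∈ S i ∧ q ∈ S i).card = c)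
    (p : Fin v) :
    (univ.filter fun i => p ∈ S i).card * (m - 1) = c * (v - 1) := by
  have inner : ∀ i : Fin b,
      (∑ q ∈ univ.erase p, if p ∈ S i ∧ q ∈ S i then 1 else 0)
        = if p ∈ S i then m - 1 else 0 := by
    intro i
    by_cases hpi : p ∈ S i
    · simp only [hpi, true_and, if_true]
      have hfe : ((univ.erase p).filter (· ∈ S i)) = (S i).erase p := by
        ext q
        simp [Finset.mem_erase, Finset.mem_filter, and_comm]
      rw [← Finset.card_filter, hfe, Finset.card_erase_of_mem hpi, hm]
    · simp [hpi]
  have lhs_eq : ∑ q ∈ univ.erase p, (univ.filter fun i => p ∈ S i ∧ q ∈ S i).card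
      = c * (v - 1) := by
    rw [Finset.sum_congr rfl (fun q hq =>
      hp p q (Ne.symm (Finset.ne_of_mem_erase hq)))]
    rw [Finset.sum_const, Finset.card_erase_of_mem (Finset.mem_univ p)]
    simp [mul_comm]
  calc (univ.filter fun i => p ∈ S i).card * (m - 1)
      = ∑ i ∈ (univ.filter fun i => p ∈ S i), (m - 1) := by
        rw [Finset.sum_const, smul_eq_mul]
    _ = ∑ i : Fin b, if p ∈ S i then m - 1 else 0 := by
        rw [Finset.sum_filter]
    _ = ∑ i : Fin b, ∑ q ∈ univ.erase p, (if p ∈ S i ∧ q ∈ S i then 1 else 0) := by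
        exact Finset.sum_congr rfl (fun i _ => (inner i).symm)
    _ = ∑ q ∈ univ.erase p, ∑ i : Fin b, (if p ∈ S i ∧ q ∈ S i then 1 else 0) :=
        Finset.sum_comm
    _ = ∑ q ∈ univ.erase p, (univ.filter fun i => p ∈ S i ∧ q ∈ S i).card := by
        exact Finset.sum_congr rfl (fun q _ => (Finset.card_filter _ _).symm)
    _ = c * (v - 1) := lhs_eq

/-- Total incidence count: `∑_p r_p = b * m`. -/
private lemma tot_count {v b : ℕ} (S : Fin b → Finset (Fin v)) (m : ℕ)
    (hm : ∀ i, (S i).card = m) :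
    ∑ p : Fin v, (univ.filter fun i => p ∈ S i).card = b * m := by
  simp only [Finset.card_filter]
  rw [Finset.sum_comm]
  have : ∀ i : Fin b, (∑ p : Fin v, if p ∈ S i then 1 else 0) = m := by
    intro i
    rw [← Finset.card_filter]
    rw [show (univ.filter (fun p => p ∈ S i)) = S i by ext q; simp]
    exact hm i
  rw [Finset.sum_congr rfl (fun i _ => this i), Finset.sum_const]
  simp [Finset.card_univ]

/-- If a `(v,k,λ)`-BIBD has a perfect nesting (a map `φ` with
`φ i ∉ B i` such that every pair of distinct points lies in exactly `λ+1`
augmented blocks, i.e. the augmented blocks form a `(v,k+1,λ+1)`-BIBD),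
then `v ≡ 1 (mod 2k)`. -/
theorem stmt3 (v k lam b : ℕ) (hk2 : 2 ≤ k) (hkv : k < v)
    (B : Fin b → Finset (Fin v)) (hcard : ∀ i, (B i).card = k)
    (hpair : ∀ p q : Fin v, p ≠ q →
      (univ.filter (fun i => p ∈ B i ∧ q ∈ B i)).card = lam)
    (φ : Fin b → Fin v) (hφ : ∀ i, φ i ∉ B i)
    (hperfect : ∀ p q : Fin v, p ≠ q →
      (univ.filter (fun i => p ∈ insert (φ i) (B i) ∧ q ∈ insert (φ i) (B i))).card
        = lam + 1) :
    v % (2 * k) = 1 := by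
  have hv3 : 3 ≤ v := by omega
  set S' : Fin b → Finset (Fin v) := fun i => insert (φ i) (B i) with hS'
  have hcard' : ∀ i, (S' i).card = k + 1 := by
    intro i
    rw [hS']
    rw [Finset.card_insert_of_notMem (hφ i), hcard]
  -- per-point equations
  have hA : ∀ p : Fin v,
      (univ.filter fun i => p ∈ B i).card * (k - 1) = lam * (v - 1) :=
    repl_count B k lam hcard hpair
  have hA' : ∀ p : Fin v,
      (univ.filter fun i => p ∈ S' i).card * ((k + 1) - 1) = (lam + 1) * (v - 1) :=
    repl_count S' (k + 1) (lam + 1) hcard' hperfect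
  -- global equations
  have g1 : (b * k) * (k - 1) = v * (lam * (v - 1)) := by
    have := tot_count B k hcard
    calc (b * k) * (k - 1)
        = (∑ p : Fin v, (univ.filter fun i => p ∈ B i).card) * (k - 1) := by rw [this]
      _ = ∑ p : Fin v, (univ.filter fun i => p ∈ B i).card * (k - 1) :=
          Finset.sum_mul ..
      _ = ∑ p : Fin v, lam * (v - 1) := Finset.sum_congr rfl (fun p _ => hA p)
      _ = v * (lam * (v - 1)) := by simp [Finset.sum_const, Finset.card_univ, mul_comm]
  have g2 : (b * (k + 1)) * k = v * ((lam + 1) * (v - 1)) := by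
    have := tot_count S' (k + 1) hcard'
    calc (b * (k + 1)) * k
        = (∑ p : Fin v, (univ.filter fun i => p ∈ S' i).card) * ((k + 1) - 1) := by
          rw [this, Nat.add_sub_cancel]
      _ = ∑ p : Fin v, (univ.filter fun i => p ∈ S' i).card * ((k + 1) - 1) :=
          Finset.sum_mul ..
      _ = ∑ p : Fin v, (lam + 1) * (v - 1) := Finset.sum_congr rfl (fun p _ => hA' p)
      _ = v * ((lam + 1) * (v - 1)) := by
          simp [Finset.sum_const, Finset.card_univ, mul_comm]
  -- k = 2 * lam + 1
  have hk1 : (1 : ℤ) ≤ (k : ℤ) := by exact_mod_cast (by omega : 1 ≤ k)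
  have G1 : (b : ℤ) * k * ((k : ℤ) - 1) = (v : ℤ) * ((lam : ℤ) * ((v : ℤ) - 1)) := by
    have := congrArg (fun n : ℕ => (n : ℤ)) g1
    push_cast [Nat.cast_sub (by omega : 1 ≤ k), Nat.cast_sub (by omega : 1 ≤ v)] at this
    linarith [this]
  have G2 : (b : ℤ) * ((k : ℤ) + 1) * k = (v : ℤ) * (((lam : ℤ) + 1) * ((v : ℤ) - 1)) := by
    have := congrArg (fun n : ℕ => (n : ℤ)) g2
    push_cast [Nat.cast_sub (by omega : 1 ≤ v)] at this
    linarith [this]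
  have hvv : ((v : ℤ) * ((v : ℤ) - 1)) ≠ 0 := by
    have : (3 : ℤ) ≤ (v : ℤ) := by exact_mod_cast hv3
    nlinarith
  have hlk : (lam : ℤ) * ((k : ℤ) + 1) = ((lam : ℤ) + 1) * ((k : ℤ) - 1) := by
    apply mul_right_cancel₀ hvv
    calc (lam : ℤ) * ((k : ℤ) + 1) * ((v : ℤ) * ((v : ℤ) - 1))
        = ((k : ℤ) + 1) * ((v : ℤ) * ((lam : ℤ) * ((v : ℤ) - 1))) := by ring
      _ = ((k : ℤ) + 1) * ((b : ℤ) * k * ((k : ℤ) - 1)) := by rw [G1]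
      _ = ((k : ℤ) - 1) * ((b : ℤ) * ((k : ℤ) + 1) * k) := by ring
      _ = ((k : ℤ) - 1) * ((v : ℤ) * (((lam : ℤ) + 1) * ((v : ℤ) - 1))) := by rw [G2]
      _ = ((lam : ℤ) + 1) * ((k : ℤ) - 1) * ((v : ℤ) * ((v : ℤ) - 1)) := by ring
  have hkZ : (k : ℤ) = 2 * (lam : ℤ) + 1 := by linear_combination -hlk
  have hk : k = 2 * lam + 1 := by exact_mod_cast hkZ
  have hlam1 : 1 ≤ lam := by omega
  -- pick a point
  have hv0 : 0 < v := by omega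
  set p : Fin v := ⟨0, hv0⟩ with hpdef
  set r : ℕ := (univ.filter fun i => p ∈ B i).card with hrdef
  set n : ℕ := (univ.filter fun i => φ i = p).card with hndef
  -- 2r = v - 1
  have hr : 2 * r = v - 1 := by
    have h := hA p
    rw [← hrdef, show k - 1 = 2 * lam by omega] at h
    have h' : (2 * r) * lam = (v - 1) * lam := by
      calc (2 * r) * lam = r * (2 * lam) := by ring
        _ = lam * (v - 1) := h
        _ = (v - 1) * lam := by ring
    exact Nat.eq_of_mul_eq_mul_right (by omega) h'
  -- r' = n + r
  have hr' : (univ.filter fun i => p ∈ S' i).card = n + r := by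
    have : (univ.filter fun i => p ∈ S' i)
        = (univ.filter fun i => φ i = p) ∪ (univ.filter fun i => p ∈ B i) := by
      ext i
      simp only [hS', Finset.mem_filter, Finset.mem_insert, Finset.mem_union]
      constructor
      · rintro ⟨hi, h | h⟩
        · exact Or.inl ⟨hi, h.symm⟩
        · exact Or.inr ⟨hi, h⟩
      · rintro (⟨hi, h⟩ | ⟨hi, h⟩)
        · exact ⟨hi, Or.inl h.symm⟩
        · exact ⟨hi, Or.inr h⟩
    rw [this, Finset.card_union_of_disjoint, ← hndef, ← hrdef]
    rw [Finset.disjoint_left]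
    intro i hi1 hi2
    rw [Finset.mem_filter] at hi1 hi2
    exact hφ i (hi1.2 ▸ hi2.2)
  -- (n + r) * k = (lam + 1) * (v - 1)
  have hB : (n + r) * k = (lam + 1) * (v - 1) := by
    have h := hA' p
    rw [hr'] at h
    simpa using h
  -- conclude v - 1 = n * (2 * k)
  have hnk : v - 1 = n * (2 * k) := by
    rw [hk] at hB
    rw [show (lam + 1) * (v - 1) = (lam + 1) * (2 * r) by rw [hr]] at hB
    -- (n + r) * (2*lam + 1) = (lam+1) * (2*r)
    have hnr : n * (2 * lam + 1) = r := by
      have e1 : (n + r) * (2 * lam + 1) = 2 * (n * lam) + n + 2 * (r * lam) + r := by ring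
      have e2 : (lam + 1) * (2 * r) = 2 * (r * lam) + 2 * r := by ring
      have e3 : n * (2 * lam + 1) = 2 * (n * lam) + n := by ring
      linarith [hB, e1, e2, e3]
    calc v - 1 = 2 * r := hr.symm
      _ = 2 * (n * (2 * lam + 1)) := by rw [hnr]
      _ = n * (2 * (2 * lam + 1)) := by ring
      _ = n * (2 * k) := by rw [hk]
  set t := n * (2 * k) with htdef
  have hveq : v = t + 1 := by omega
  rw [hveq, htdef, mul_comm n (2 * k), Nat.mul_add_mod]
  exact Nat.mod_eq_of_lt (by omega)
end

section
/- With the setup of Theorem 3.2, the multiset of differences of distinct elements of B_s = {(1,s),(1,-s),(2,sx),(2,-sx)} ⊆ Z₃ × R_v equals ({0} × 2sU) ∪ ({1,2} × (x+1)sU), where U = {1,x,-1,-x}. -/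
open Finset

lemma card4_ne {α : Type*} [DecidableEq α] {a b c d : α}
    (h : ({a, b, c, d} : Finset α).card = 4) :
    a ≠ b ∧ a ≠ c ∧ a ≠ d ∧ b ≠ c ∧ b ≠ d ∧ c ≠ d := by
  have h3 : ∀ u v w : α, ({u, v, w} : Finset α).card ≤ 3 := by
    intro u v w
    have h2 : ({v, w} : Finset α).card ≤ 2 :=
      le_trans (Finset.card_insert_le _ _) (by simp)
    have := Finset.card_insert_le u ({v, w} : Finset α)
    omega
  refine ⟨?_, ?_, ?_, ?_, ?_, ?_⟩ <;> intro h' <;> subst h'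
  · have hsub : ({a, a, c, d} : Finset α) ⊆ {a, c, d} := by intro z; simp; try tauto
    have := (Finset.card_le_card hsub).trans (h3 _ _ _); omega
  · have hsub : ({a, b, a, d} : Finset α) ⊆ {a, b, d} := by intro z; simp; try tauto
    have := (Finset.card_le_card hsub).trans (h3 _ _ _); omega
  · have hsub : ({a, b, c, a} : Finset α) ⊆ {a, b, c} := by intro z; simp; try tauto
    have := (Finset.card_le_card hsub).trans (h3 _ _ _); omega
  · have hsub : ({a, b, b, d} : Finset α) ⊆ {a, b, d} := by intro z; simp; try tauto
    have := (Finset.card_le_card hsub).trans (h3 _ _ _); omega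
  · have hsub : ({a, b, c, b} : Finset α) ⊆ {a, b, c} := by intro z; simp; try tauto
    have := (Finset.card_le_card hsub).trans (h3 _ _ _); omega
  · have hsub : ({a, b, c, c} : Finset α) ⊆ {a, b, c} := by intro z; simp; try tauto
    have := (Finset.card_le_card hsub).trans (h3 _ _ _); omega

/-- In the setting of Theorem 3.2, the multiset of
differences of distinct elements of `B_s = {(1,s),(1,-s),(2,sx),(2,-sx)}`
in `Z₃ × R` equals `({0} × 2sU) ∪ ({1,2} × (x+1)sU)`, where
`U = {1,x,-1,-x}`, each listed element occurring once. -/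
theorem stmt13 {R : Type*} [CommRing R] [DecidableEq R] (x s : R)
    (hx2 : x ^ 2 = -1) (hord : orderOf x = 4) (hs : s ≠ 0)
    (hU : ({s, s * x, -s, -(s * x)} : Finset R).card = 4)
    (h2U : ({2 * s, 2 * s * x, -(2 * s), -(2 * s * x)} : Finset R).card = 4)
    (hxU : ({(x + 1) * s, (x + 1) * s * x, -((x + 1) * s), -((x + 1) * s * x)} :
        Finset R).card = 4) :
    ((((({((1 : ZMod 3), s), (1, -s), (2, s * x), (2, -(s * x))} : Finset (ZMod 3 × R)) ×ˢ
        ({((1 : ZMod 3), s), (1, -s), (2, s * x), (2, -(s * x))} : Finset (ZMod 3 × R))).filter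
        (fun p => p.1 ≠ p.2)).val).map (fun p => p.1 - p.2))
      = (((({0} : Finset (ZMod 3)) ×ˢ
            ({2 * s, 2 * s * x, -(2 * s), -(2 * s * x)} : Finset R)) ∪
          (({1, 2} : Finset (ZMod 3)) ×ˢ
            ({(x + 1) * s, (x + 1) * s * x, -((x + 1) * s), -((x + 1) * s * x)} :
              Finset R)))).val := by
  obtain ⟨u1, u2, u3, u4, u5, u6⟩ := card4_ne hU
  obtain ⟨v1, v2, v3, v4, v5, v6⟩ := card4_ne h2U
  obtain ⟨w1, w2, w3, w4, w5, w6⟩ := card4_ne hxU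
  have h12 : (1 : ZMod 3) ≠ 2 := by decide
  have hB : (({((1 : ZMod 3), s), (1, -s), (2, s * x), (2, -(s * x))} :
      Finset (ZMod 3 × R))).val
      = ((1 : ZMod 3), s) ::ₘ ((1 : ZMod 3), -s) ::ₘ ((2 : ZMod 3), s * x) ::ₘ
        {((2 : ZMod 3), -(s * x))} := by
    rw [Finset.insert_val_of_notMem (by simp [Prod.ext_iff, h12, u2]),
      Finset.insert_val_of_notMem (by simp [Prod.ext_iff, h12]),
      Finset.insert_val_of_notMem (by simp [Prod.ext_iff, u5])]
    rfl
  rw [Finset.filter_val, Finset.product_val, hB]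
  have z11 : (1 : ZMod 3) - 1 = 0 := by decide
  have z22 : (2 : ZMod 3) - 2 = 0 := by decide
  have z12 : (1 : ZMod 3) - 2 = 2 := by decide
  have z21 : (2 : ZMod 3) - 1 = 1 := by decide
  have hA : (({2 * s, 2 * s * x, -(2 * s), -(2 * s * x)} : Finset R)).val
      = (2 * s) ::ₘ (2 * s * x) ::ₘ (-(2 * s)) ::ₘ {(-(2 * s * x))} := by
    rw [Finset.insert_val_of_notMem (by simp [v1, v2, v3]),
      Finset.insert_val_of_notMem (by simp [v4, v5]),
      Finset.insert_val_of_notMem (by simp [v6])]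
    rfl
  have hC : (({(x + 1) * s, (x + 1) * s * x, -((x + 1) * s), -((x + 1) * s * x)} : Finset R)).val
      = ((x + 1) * s) ::ₘ ((x + 1) * s * x) ::ₘ (-((x + 1) * s)) ::ₘ {(-((x + 1) * s * x))} := by
    rw [Finset.insert_val_of_notMem (by simp [w1, w2, w3]),
      Finset.insert_val_of_notMem (by simp [w4, w5]),
      Finset.insert_val_of_notMem (by simp [w6])]
    rfl
  have hZ : (({1, 2} : Finset (ZMod 3))).val = (1 : ZMod 3) ::ₘ {2} := by
    rw [Finset.insert_val_of_notMem (by simp [h12])]; rfl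
  have hdisj : Disjoint
      (({0} : Finset (ZMod 3)) ×ˢ ({2 * s, 2 * s * x, -(2 * s), -(2 * s * x)} : Finset R))
      ((({1, 2} : Finset (ZMod 3))) ×ˢ
        ({(x + 1) * s, (x + 1) * s * x, -((x + 1) * s), -((x + 1) * s * x)} : Finset R)) := by
    rw [Finset.disjoint_left]
    rintro ⟨a, b⟩ ha hb
    simp only [Finset.mem_product, Finset.mem_singleton, Finset.mem_insert] at ha hb
    rcases hb.1 with h | h <;> rw [ha.1] at h <;> exact absurd h (by decide)
  rw [← Finset.disjUnion_eq_union _ _ hdisj, show ∀ (A B : Finset (ZMod 3 × R)) (h : Disjoint A B), (A.disjUnion B h).val = A.val + B.val from fun _ _ _ => rfl, Finset.product_val,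
    Finset.product_val, hA, hC, hZ, Finset.singleton_val]
  simp only [Multiset.cons_product, Multiset.product_cons, Multiset.product_singleton,
    Multiset.map_cons, Multiset.map_singleton, 
    Multiset.filter_add, Multiset.filter_cons, Multiset.filter_singleton,
    Multiset.map_add, ne_eq, Prod.mk.injEq, not_and, Prod.mk_sub_mk,
    u1, u2, u3, u4, u5, u6, h12, u1.symm, u2.symm, u3.symm, u4.symm, u5.symm, u6.symm,
    h12.symm, true_implies, false_implies, implies_true,
    not_false_eq_true, not_true_eq_false, if_true, if_false,
    Multiset.map_zero]
  rw [z11, z22, z12, z21,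
    show -s - s = -(2*s) from by ring,
    show s*x - s = (x+1)*s*x from by linear_combination -s*hx2,
    show -(s*x) - s = -((x+1)*s) from by ring,
    show s - -s = 2*s from by ring,
    show s*x - -s = (x+1)*s from by ring,
    show -(s*x) - -s = -((x+1)*s*x) from by linear_combination s*hx2,
    show s - s*x = -((x+1)*s*x) from by linear_combination s*hx2,
    show -s - s*x = -((x+1)*s) from by ring,
    show -(s*x) - s*x = -(2*s*x) from by ring,
    show s - -(s*x) = (x+1)*s from by ring,
    show -s - -(s*x) = (x+1)*s*x from by linear_combination -s*hx2,
    show s*x - -(s*x) = 2*s*x from by ring]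
  simp only [Multiset.empty_eq_zero, Multiset.map_zero, zero_add, add_zero,
    ← Multiset.singleton_add]
  ac_rfl
end

section
/- (Product construction for BRDFs.) If there exist a (G₁,H,k,1)-BRDF F and a (G₂,k,1) homogeneous difference matrix M, then the family F∘M = {B∘M^c : B ∈ F, c a column of M}, where for B = {b₁,…,b_k} and column c one sets B∘M^c = {(b₁,m_{1c}),…,(b_k,m_{kc})}, is a (G₁×G₂, H×G₂, k, 1)-BRDF. -/
open Finset
open scoped Classical

/-- The number of times `d` occurs as a difference of two distinct entries of
a block of the family `Bl` (blocks are given as injective `k`-tuples). -/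
noncomputable def diffCount {G : Type*} [AddCommGroup G] {ι : Type*} [Fintype ι]
    {k : ℕ} (Bl : ι → Fin k → G) (d : G) : ℕ :=
  (univ.filter (fun p : ι × Fin k × Fin k =>
    p.2.1 ≠ p.2.2 ∧ Bl p.1 p.2.1 - Bl p.1 p.2.2 = d)).card

/-- A `(G,H,k,1)`-Banff relative difference family: blocks are `k`-subsets of
`G` (injective tuples), their within-block differences cover each element of
`G \ H` exactly once and no element of `H`, the blocks avoid `H`, and the
blocks together with their negatives are pairwise disjoint. -/
def IsBRDF {G : Type*} [AddCommGroup G] {ι : Type*} [Fintype ι] {k : ℕ}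
    (H : AddSubgroup G) (Bl : ι → Fin k → G) : Prop :=
  (∀ i, Function.Injective (Bl i)) ∧
  (∀ d : G, d ∉ H → diffCount Bl d = 1) ∧
  (∀ d : G, d ∈ H → diffCount Bl d = 0) ∧
  (∀ i r, Bl i r ∉ H) ∧
  (∀ i j r r', Bl i r = Bl j r' → i = j ∧ r = r') ∧
  (∀ i j r r', Bl i r ≠ -Bl j r')

/-- **product construction for BRDFs.** If `Bl` is a
`(G₁,H,k,1)`-BRDF and `M` is a `(G₂,k,1)` homogeneous difference matrix
(rows `M r` are permutations of `G₂` and columnwise differences of distinct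
rows are permutations of `G₂`), then the family
`F∘M = { ((Bl i r, M r c))_r : i ∈ ι, c ∈ G₂ }` is a
`(G₁ × G₂, H × G₂, k, 1)`-BRDF. -/
theorem stmt15 {G₁ G₂ : Type*} [AddCommGroup G₁] [AddCommGroup G₂] [Fintype G₂]
    {ι : Type*} [Fintype ι] {k : ℕ} (H : AddSubgroup G₁)
    (Bl : ι → Fin k → G₁) (hF : IsBRDF H Bl)
    (M : Fin k → G₂ → G₂)
    (hrows : ∀ r, Function.Bijective (M r))
    (hdiffs : ∀ r r', r ≠ r' → Function.Bijective (fun c => M r c - M r' c)) :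
    IsBRDF (H.prod (⊤ : AddSubgroup G₂))
      (fun (p : ι × G₂) (r : Fin k) => (Bl p.1 r, M r p.2)) := by

  obtain ⟨hinj, h1, h0, hH, hdisj, hneg⟩ := hF
  have key : ∀ d : G₁ × G₂,
      diffCount (fun (p : ι × G₂) (r : Fin k) => (Bl p.1 r, M r p.2)) d
        = diffCount Bl d.1 := by
    intro d
    unfold diffCount
    apply Finset.card_bij (fun p _ => (p.1.1, p.2))
    · intro p hp
      simp only [mem_filter, mem_univ, true_and] at hp ⊢
      refine ⟨hp.1, ?_⟩
      have := congrArg Prod.fst hp.2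
      simpa using this
    · rintro ⟨⟨i, c⟩, r, r'⟩ ha ⟨⟨j, c'⟩, s, s'⟩ hb hab
      simp only [mem_filter, mem_univ, true_and] at ha hb
      simp only [Prod.mk.injEq] at hab
      obtain ⟨hij, hrs, hrs'⟩ := hab
      subst hij; subst hrs; subst hrs'
      have h2a := congrArg Prod.snd ha.2
      have h2b := congrArg Prod.snd hb.2
      simp only [Prod.snd_sub] at h2a h2b
      have hcc : c = c' := (hdiffs r r' ha.1).injective (by
        show M r c - M r' c = M r c' - M r' c'
        simpa using h2a.trans h2b.symm)
      simp [hcc]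
    · rintro ⟨i, r, r'⟩ hb
      simp only [mem_filter, mem_univ, true_and] at hb
      obtain ⟨c, hc⟩ := (hdiffs r r' hb.1).surjective d.2
      refine ⟨((i, c), r, r'), ?_, rfl⟩
      simp only [mem_filter, mem_univ, true_and]
      exact ⟨hb.1, Prod.ext hb.2 hc⟩
  refine ⟨?_, ?_, ?_, ?_, ?_, ?_⟩
  · intro p r r' h
    exact hinj p.1 (congrArg Prod.fst h)
  · intro d hd
    rw [key]
    apply h1
    intro h
    exact hd (AddSubgroup.mem_prod.mpr ⟨h, trivial⟩)
  · intro d hd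
    rw [key]
    exact h0 d.1 (AddSubgroup.mem_prod.mp hd).1
  · intro i r hmem
    exact hH i.1 r (AddSubgroup.mem_prod.mp hmem).1
  · intro i j r r' h
    have h1' := congrArg Prod.fst h
    have h2' := congrArg Prod.snd h
    simp only at h1' h2'
    obtain ⟨hij, hrr⟩ := hdisj i.1 j.1 r r' h1'
    subst hrr
    have : i.2 = j.2 := (hrows r).injective h2'
    exact ⟨Prod.ext hij this, rfl⟩
  · intro i j r r' h
    apply hneg i.1 j.1 r r'
    have := congrArg Prod.fst h
    simpa using this
end
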